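/- If two pure states ψ, ψ′ satisfy |⟨ψ|ψ′⟩|² = F, then in any classical model reproducing quantum statistics the overlap is bounded: ∫ min(ρ(x|ψ), ρ(x|ψ′)) dμ ≤ 1 - √(1-F). -/

import Mathlib

open MeasureTheory ComplexOrder Matrix

lemma inner_vecMulVec {d : ℕ} (v x : EuclideanSpace ℂ (Fin d)) (E : Matrix (Fin d) (Fin d) ℂ)
    (hE : E = Matrix.vecMulVec (fun i => v i) (fun i => star (v i))) :
    (inner ℂ x (WithLp.toLp 2 (E.mulVec x)) : ℂ) = star (inner ℂ v x : ℂ) * (inner ℂ v x : ℂ) := by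
  subst hE
  simp only [PiLp.inner_apply, RCLike.inner_apply, Matrix.mulVec, Matrix.vecMulVec_apply,
    dotProduct, Finset.mul_sum, Finset.sum_mul, star_sum, star_mul', RCLike.star_def]
  rw [Finset.sum_comm]
  congr 1; ext i; congr 1; ext j; ring_nf
  simp [mul_comm, mul_left_comm, mul_assoc]

set_option maxHeartbeats 2000000 in

lemma psd_vecMulVec {d : ℕ} (v : EuclideanSpace ℂ (Fin d)) :
    (Matrix.vecMulVec (fun i => v i) (fun i => star (v i))).PosSemidef := by
  rw [Matrix.posSemidef_iff_dotProduct_mulVec]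
  constructor
  · ext i j
    simp [Matrix.conjTranspose_apply, Matrix.vecMulVec_apply, mul_comm]
  · intro x
    have : star x ⬝ᵥ ((Matrix.vecMulVec (fun i => v i) (fun i => star (v i))).mulVec x)
        = star ((fun i => star (v i)) ⬝ᵥ x) * ((fun i => star (v i)) ⬝ᵥ x) := by
      simp only [Matrix.mulVec, Matrix.vecMulVec_apply, dotProduct, Pi.star_apply,
        Finset.mul_sum, Finset.sum_mul, star_sum, star_mul']
      rw [Finset.sum_comm]
      congr 1; ext i; congr 1; ext j; ring_nf
      simp [mul_comm, mul_left_comm, mul_assoc]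
    rw [this]
    exact star_mul_self_nonneg _

lemma psd_one_sub_vecMulVec {d : ℕ} (v : EuclideanSpace ℂ (Fin d)) (hv : ‖v‖ = 1) :
    (1 - Matrix.vecMulVec (fun i => v i) (fun i => star (v i))).PosSemidef := by
  rw [Matrix.posSemidef_iff_dotProduct_mulVec]
  constructor
  · ext i j
    simp [Matrix.conjTranspose_apply, Matrix.one_apply, Matrix.vecMulVec_apply, mul_comm,
      apply_ite]
    split_ifs with h1 h2 h3 <;> simp_all [eq_comm, mul_comm]
  · intro x
    set x' : EuclideanSpace ℂ (Fin d) := WithLp.toLp 2 x with hx'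
    have h1 : star x ⬝ᵥ ((1 - Matrix.vecMulVec (fun i => v i) (fun i => star (v i))).mulVec x)
        = (‖x'‖^2 : ℝ) - star ((inner ℂ v x' : ℂ)) * (inner ℂ v x' : ℂ) := by
      rw [Matrix.sub_mulVec, dotProduct_sub, Matrix.one_mulVec]
      congr 1
      · have : star x ⬝ᵥ x = (inner ℂ x' x' : ℂ) := by
          simp only [dotProduct, PiLp.inner_apply, RCLike.inner_apply, hx', PiLp.toLp_apply,
            Pi.star_apply, RCLike.star_def, mul_comm]
        rw [this, inner_self_eq_norm_sq_to_K]
        norm_cast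
      · simp only [Matrix.mulVec, Matrix.vecMulVec_apply, dotProduct, Pi.star_apply,
          Finset.mul_sum, Finset.sum_mul, PiLp.inner_apply, RCLike.inner_apply, star_sum, star_mul']
        rw [Finset.sum_comm]
        congr 1; ext i; congr 1; ext j; ring_nf
        simp [mul_comm, mul_left_comm, mul_assoc, hx']
    rw [h1]
    have h2 : star ((inner ℂ v x' : ℂ)) * (inner ℂ v x' : ℂ)
        = ((Complex.normSq (inner ℂ v x' : ℂ) : ℝ) : ℂ) := by
      rw [RCLike.star_def, mul_comm, Complex.mul_conj]
    rw [h2]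
    have h3 : Complex.normSq (inner ℂ v x' : ℂ) ≤ ‖x'‖^2 := by
      have := norm_inner_le_norm (𝕜 := ℂ) v x'
      rw [hv, one_mul] at this
      have h4 : Complex.normSq (inner ℂ v x' : ℂ) = ‖(inner ℂ v x' : ℂ)‖^2 := by
        rw [Complex.sq_norm]
      rw [h4]
      nlinarith [norm_nonneg (inner ℂ v x' : ℂ)]
    have : (0:ℂ) ≤ ((‖x'‖^2 - Complex.normSq (inner ℂ v x' : ℂ) : ℝ) : ℂ) := by
      rw [Complex.zero_le_real]; linarith
    push_cast at this ⊢
    exact this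

set_option maxHeartbeats 2000000 in
lemma exists_optimal_povm {d : ℕ} (ψ ψ' : EuclideanSpace ℂ (Fin d))
    (hψ : ‖ψ‖ = 1) (hψ' : ‖ψ'‖ = 1) :
    ∃ E : Matrix (Fin d) (Fin d) ℂ, E.PosSemidef ∧ (1 - E).PosSemidef ∧
      Real.sqrt (1 - ‖(inner ℂ ψ ψ' : ℂ)‖ ^ 2)
        ≤ (inner ℂ ψ (WithLp.toLp 2 (E.mulVec ψ)) : ℂ).re - (inner ℂ ψ' (WithLp.toLp 2 (E.mulVec ψ')) : ℂ).re := by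
  set c : ℂ := inner ℂ ψ ψ' with hc
  set r : ℝ := ‖c‖ with hr
  have hr0 : 0 ≤ r := norm_nonneg c
  have hr1 : r ≤ 1 := by
    have := norm_inner_le_norm (𝕜 := ℂ) ψ ψ'
    rw [hψ, hψ', one_mul] at this
    simpa [hr] using this
  by_cases hdeg : r = 1
  · -- degenerate case : take E = 0
    refine ⟨0, Matrix.PosSemidef.zero, by simpa using Matrix.PosSemidef.one, ?_⟩
    have : Real.sqrt (1 - r ^ 2) = 0 := by
      rw [hdeg]; norm_num
    rw [this]
    simp [Matrix.zero_mulVec, inner_zero_right]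
  · have hrlt : r < 1 := lt_of_le_of_ne hr1 hdeg
    set A : ℝ := Real.sqrt (1 + r) with hA
    set B : ℝ := Real.sqrt (1 - r) with hB
    have hA2 : A ^ 2 = 1 + r := Real.sq_sqrt (by linarith)
    have hB2 : B ^ 2 = 1 - r := Real.sq_sqrt (by linarith)
    set u : ℝ := (A + B) / 2 with hu
    set w : ℝ := (A - B) / 2 with hw
    set σ : ℝ := A * B with hσ
    have hσpos : 0 < σ := by
      apply mul_pos <;> [skip; skip] <;> apply Real.sqrt_pos.2 <;> linarith
    have hσ2 : σ ^ 2 = 1 - r ^ 2 := by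
      rw [hσ, mul_pow, hA2, hB2]; ring
    have hsqrt : Real.sqrt (1 - r ^ 2) = σ := by
      rw [← hσ2, Real.sqrt_sq hσpos.le]
    have huw1 : u ^ 2 + w ^ 2 = 1 := by
      rw [hu, hw]; nlinarith [hA2, hB2]
    have huws : u ^ 2 - w ^ 2 = σ := by
      rw [hu, hw, hσ]; ring
    have huwr : 2 * u * w = r := by
      rw [hu, hw]; nlinarith [hA2, hB2]
    -- phase
    set p : ℂ := if c = 0 then 1 else c / (r : ℂ) with hp
    have hrnec : c ≠ 0 → (r:ℂ) ≠ 0 := fun h0 =>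
      Complex.ofReal_ne_zero.2 (by simpa [hr] using norm_ne_zero_iff.mpr h0)
    have hcp : c = (r : ℂ) * p := by
      by_cases h0 : c = 0
      · have hr0' : r = 0 := by rw [hr, h0]; simp
        rw [h0, hr0']; simp
      · rw [hp, if_neg h0, mul_comm, div_mul_cancel₀ _ (hrnec h0)]
    have hpp : p * star p = 1 := by
      by_cases h0 : c = 0
      · simp [hp, h0]
      · rw [RCLike.star_def, Complex.mul_conj]
        have h1 : Complex.normSq p = 1 := by
          rw [hp, if_neg h0, Complex.normSq_div, Complex.normSq_ofReal]
          have h2 : Complex.normSq c = r ^ 2 := by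
            rw [hr, Complex.sq_norm]
          have : r ≠ 0 := by simpa [hr] using norm_ne_zero_iff.mpr h0
          rw [h2, sq, div_self (mul_ne_zero this this)]
        rw [h1]; norm_num
    -- basic inner products
    have hψψ : (inner ℂ ψ ψ : ℂ) = 1 := by
      rw [inner_self_eq_norm_sq_to_K, hψ]; norm_num
    have hψ'ψ' : (inner ℂ ψ' ψ' : ℂ) = 1 := by
      rw [inner_self_eq_norm_sq_to_K, hψ']; norm_num
    have hψ'ψ : (inner ℂ ψ' ψ : ℂ) = star c := by
      rw [← inner_conj_symm]; rfl
    set χ : EuclideanSpace ℂ (Fin d) := ψ' - c • ψ with hχ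
    have hχψ : (inner ℂ χ ψ : ℂ) = 0 := by
      rw [hχ, inner_sub_left, inner_smul_left, hψψ, hψ'ψ, RCLike.star_def]
      ring
    have hψχ : (inner ℂ ψ χ : ℂ) = 0 := by
      rw [← inner_conj_symm, hχψ, map_zero]
    have hccr : (starRingEnd ℂ) c * c = ((r ^ 2 : ℝ) : ℂ) := by
      rw [mul_comm, Complex.mul_conj, hr, Complex.sq_norm]
    have hχψ' : (inner ℂ χ ψ' : ℂ) = ((σ ^ 2 : ℝ) : ℂ) := by
      rw [hχ, inner_sub_left, inner_smul_left, hψ'ψ', ← hc, hccr, hσ2]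
      push_cast; ring
    have hχχ : (inner ℂ χ χ : ℂ) = ((σ ^ 2 : ℝ) : ℂ) := by
      rw [hχ, inner_sub_right, inner_smul_right, hχψ', hχψ, hσ2]
      push_cast; ring
    -- the optimal measurement direction
    set β : ℂ := -(((w / σ : ℝ)) : ℂ) * star p with hβ
    have hβc : (starRingEnd ℂ) β = -(((w / σ : ℝ)) : ℂ) * p := by
      rw [hβ]; simp [RCLike.star_def, Complex.conj_ofReal]
    set v : EuclideanSpace ℂ (Fin d) := (u : ℂ) • ψ + β • χ with hv
    have hvψ : (inner ℂ v ψ : ℂ) = (u : ℂ) := by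
      rw [hv, inner_add_left, inner_smul_left, inner_smul_left, hψψ, hχψ, Complex.conj_ofReal]
      ring
    have hvψ' : (inner ℂ v ψ' : ℂ) = p * ((u * r - w * σ : ℝ) : ℂ) := by
      rw [hv, inner_add_left, inner_smul_left, inner_smul_left, hχψ', ← hc, hcp, hβc,
        Complex.conj_ofReal]
      push_cast
      field_simp
      ring
    have hββ : (starRingEnd ℂ) β * β = (((w / σ) ^ 2 : ℝ) : ℂ) := by
      rw [hβc, hβ]
      have : (-(((w / σ : ℝ)) : ℂ) * p) * (-(((w / σ : ℝ)) : ℂ) * star p)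
          = (((w / σ : ℝ)) : ℂ) ^ 2 * (p * star p) := by ring
      rw [this, hpp, mul_one]
      push_cast; ring
    have hvv : (inner ℂ v v : ℂ) = 1 := by
      have e2 : (inner ℂ ψ v : ℂ) = (u : ℂ) := by
        rw [hv, inner_add_right, inner_smul_right, inner_smul_right, hψψ, hψχ]; ring
      have e3 : (inner ℂ χ v : ℂ) = β * ((σ ^ 2 : ℝ) : ℂ) := by
        rw [hv, inner_add_right, inner_smul_right, inner_smul_right, hχψ, hχχ]; ring
      rw [hv, inner_add_left, inner_smul_left, inner_smul_left, e2, e3, Complex.conj_ofReal,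
        ← mul_assoc, hββ]
      have : ((u : ℂ)) * (u : ℂ) + (((w / σ) ^ 2 : ℝ) : ℂ) * ((σ ^ 2 : ℝ) : ℂ)
          = (((u ^ 2 + (w / σ) ^ 2 * σ ^ 2 : ℝ)) : ℂ) := by push_cast; ring
      rw [this]
      have hreal : u ^ 2 + (w / σ) ^ 2 * σ ^ 2 = 1 := by
        field_simp
        linarith [huw1]
      rw [hreal]; norm_num
    have hvnorm : ‖v‖ = 1 := by
      have h2 : ‖v‖ ^ 2 = 1 := by
        rw [norm_sq_eq_re_inner (𝕜 := ℂ), hvv]; simp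
      nlinarith [norm_nonneg v]
    refine ⟨Matrix.vecMulVec (fun i => v i) (fun i => star (v i)), psd_vecMulVec v,
      psd_one_sub_vecMulVec v hvnorm, ?_⟩
    rw [inner_vecMulVec v ψ _ rfl, inner_vecMulVec v ψ' _ rfl, hvψ, hvψ']
    have e4 : (star ((u : ℂ)) * (u : ℂ)).re = u ^ 2 := by
      rw [RCLike.star_def, Complex.conj_ofReal]
      push_cast
      norm_num [Complex.ofReal_re]
      ring
    have e5 : (star (p * ((u * r - w * σ : ℝ) : ℂ)) * (p * ((u * r - w * σ : ℝ) : ℂ))).re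
        = (u * r - w * σ) ^ 2 := by
      have : star (p * ((u * r - w * σ : ℝ) : ℂ)) * (p * ((u * r - w * σ : ℝ) : ℂ))
          = (p * star p) * (((u * r - w * σ) ^ 2 : ℝ) : ℂ) := by
        rw [RCLike.star_def, _root_.map_mul, Complex.conj_ofReal]
        push_cast
        ring
      rw [this, hpp, one_mul, Complex.ofReal_re]
    rw [e4, e5, hsqrt]
    have key : u * r - w * σ = w := by
      linear_combination (-u) * huwr + w * huws + w * huw1
    rw [key]
    linarith [huws]

/-- In any classical (ontological) model reproducing the quantum statistics of all
two-outcome POVMs, the overlap of the distributions of two pure states with fidelity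
`F = |⟨ψ|ψ′⟩|²` is at most `1 - √(1-F)`. -/
theorem overlap_le_one_sub_sqrt_one_sub_fidelity
    (d : ℕ) {X : Type*} [MeasurableSpace X] (μ : Measure X)
    (ρ : EuclideanSpace ℂ (Fin d) → X → ℝ)
    (hmeas : ∀ ψ, Measurable (ρ ψ))
    (hnonneg : ∀ ψ x, 0 ≤ ρ ψ x)
    (hdens : ∀ ψ, ‖ψ‖ = 1 → ∫ x, ρ ψ x ∂μ = 1)
    (hreproduce : ∀ E : Matrix (Fin d) (Fin d) ℂ,
      E.PosSemidef → (1 - E).PosSemidef →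
      ∃ P : X → ℝ, Measurable P ∧ (∀ x, 0 ≤ P x) ∧ (∀ x, P x ≤ 1) ∧
        ∀ ψ : EuclideanSpace ℂ (Fin d), ‖ψ‖ = 1 →
          ∫ x, P x * ρ ψ x ∂μ = (inner ℂ ψ (WithLp.toLp 2 (E.mulVec ψ)) : ℂ).re) :
    ∀ (ψ ψ' : EuclideanSpace ℂ (Fin d)) (F : ℝ), ‖ψ‖ = 1 → ‖ψ'‖ = 1 →
      ‖(inner ℂ ψ ψ' : ℂ)‖ ^ 2 = F →
      ∫ x, min (ρ ψ x) (ρ ψ' x) ∂μ ≤ 1 - Real.sqrt (1 - F) := by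
  intro ψ ψ' F hψ hψ' hF
  obtain ⟨E, hE1, hE2, hval⟩ := exists_optimal_povm ψ ψ' hψ hψ'
  rw [hF] at hval
  obtain ⟨P, hPm, hP0, hP1, hPint⟩ := hreproduce E hE1 hE2
  have hint : ∀ φ : EuclideanSpace ℂ (Fin d), ‖φ‖ = 1 → MeasureTheory.Integrable (ρ φ) μ := by
    intro φ hφ
    by_contra h
    have h2 := hdens φ hφ
    rw [integral_undef h] at h2
    exact one_ne_zero h2.symm
  have hiψ := hint ψ hψ
  have hiψ' := hint ψ' hψ'
  have hiPψ : Integrable (fun x => P x * ρ ψ x) μ := by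
    refine Integrable.mono hiψ ((hPm.mul (hmeas ψ)).aestronglyMeasurable) ?_
    filter_upwards with x
    rw [Real.norm_eq_abs, Real.norm_eq_abs, abs_mul, abs_of_nonneg (hnonneg ψ x),
      abs_of_nonneg (hP0 x)]
    nlinarith [hP0 x, hP1 x, hnonneg ψ x]
  have hiPψ' : Integrable (fun x => P x * ρ ψ' x) μ := by
    refine Integrable.mono hiψ' ((hPm.mul (hmeas ψ')).aestronglyMeasurable) ?_
    filter_upwards with x
    rw [Real.norm_eq_abs, Real.norm_eq_abs, abs_mul, abs_of_nonneg (hnonneg ψ' x),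
      abs_of_nonneg (hP0 x)]
    nlinarith [hP0 x, hP1 x, hnonneg ψ' x]
  have himin : Integrable (fun x => min (ρ ψ x) (ρ ψ' x)) μ := by
    refine Integrable.mono hiψ (((hmeas ψ).min (hmeas ψ')).aestronglyMeasurable) ?_
    filter_upwards with x
    rw [Real.norm_eq_abs, Real.norm_eq_abs, abs_of_nonneg (hnonneg ψ x),
      abs_of_nonneg (le_min (hnonneg ψ x) (hnonneg ψ' x))]
    exact min_le_left _ _
  have hpt : ∀ x, min (ρ ψ x) (ρ ψ' x) ≤ ρ ψ x - P x * ρ ψ x + P x * ρ ψ' x := by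
    intro x
    rcases le_total (ρ ψ x) (ρ ψ' x) with h | h
    · rw [min_eq_left h]
      nlinarith [hP0 x, hP1 x]
    · rw [min_eq_right h]
      nlinarith [hP0 x, hP1 x]
  have hsub : Integrable (fun x => ρ ψ x - P x * ρ ψ x) μ := hiψ.sub hiPψ
  calc ∫ x, min (ρ ψ x) (ρ ψ' x) ∂μ
      ≤ ∫ x, (ρ ψ x - P x * ρ ψ x + P x * ρ ψ' x) ∂μ :=
        integral_mono himin (hsub.add hiPψ') hpt
    _ = 1 - (inner ℂ ψ (WithLp.toLp 2 (E.mulVec ψ)) : ℂ).re + (inner ℂ ψ' (WithLp.toLp 2 (E.mulVec ψ')) : ℂ).re := by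
        rw [integral_add hsub hiPψ', integral_sub hiψ hiPψ, hdens ψ hψ,
          hPint ψ hψ, hPint ψ' hψ']
    _ ≤ 1 - Real.sqrt (1 - F) := by linarith
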